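/- Let U : F_2^n → F_2^n be an isometry for the Hamming distance, i.e., d(U(x), U(y)) = d(x,y) for all x, y. Then there exists a unique permutation σ of {1,…,n} such that for every x ∈ F_2^n and every I ⊆ {1,…,n}, U(x + e^I) = U(x) + e^{σ(I)}, where σ(I) = {σ(i) : i ∈ I}. -/

import Mathlib

/-!
Translating, we may assume `U 0 = 0`; then `U` preserves weights, so it sends each `e^i` to some
`e^{σ i}`, and `σ` is injective, hence a permutation. Since `d(x, e^i)` is `|x| - 1` or `|x| + 1`
according to whether `x i = 1`, and `U` preserves both `|x|` and `d(x, e^i)`, we get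
`U x (σ i) = x i`: `U` is the coordinate permutation `x ↦ x ∘ σ⁻¹`, which is additive.
-/

/-- States of a Boolean network on `n` components: `F_2^n`. -/
abbrev St (n : ℕ) := Fin n → ZMod 2

/-- The unit vector `e^i`. -/
def uv {n : ℕ} (i : Fin n) : St n := fun j => if j = i then 1 else 0

/-- There is an edge from `j` to `i` in the local interaction graph `G(f)(x)`,
i.e. `∂_j f_i (x) = 1`. -/
def hasEdge {n : ℕ} (f : St n → St n) (x : St n) (j i : Fin n) : Prop :=
  f (x + uv j) i ≠ f x i

/-- `(j,i)` is a positive edge of `G(f)(x)`. -/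
def edgePos {n : ℕ} (f : St n → St n) (x : St n) (j i : Fin n) : Prop :=
  hasEdge f x j i ∧ x j = f x i

/-- `(j,i)` is a negative edge of `G(f)(x)`. -/
def edgeNeg {n : ℕ} (f : St n → St n) (x : St n) (j i : Fin n) : Prop :=
  hasEdge f x j i ∧ x j ≠ f x i

/-- The local interaction graph `G(f)(x)` has a negative (elementary, directed) cycle:
a cyclic sequence of pairwise distinct vertices, each consecutive pair being an edge of
`G(f)(x)`, with an odd number of negative edges. -/
def hasNegCycleAt {n : ℕ} (f : St n → St n) (x : St n) : Prop :=
  ∃ (m : ℕ) (v : Fin (m + 1) → Fin n), Function.Injective v ∧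
    (∀ k, hasEdge f x (v k) (v (k + 1))) ∧
    Odd (Nat.card {k : Fin (m + 1) // edgeNeg f x (v k) (v (k + 1))})

/-- `f` is an and-net: each coordinate function is a product of literals. -/
def IsAndNet {n : ℕ} (f : St n → St n) : Prop :=
  ∀ i : Fin n, ∃ P N : Finset (Fin n), Disjoint P N ∧
    ∀ x : St n, f x i = (∏ j ∈ P, x j) * ∏ j ∈ N, (x j + 1)

/-- The characteristic vector `e^I` of a set `I` of coordinates. -/
def eS {n : ℕ} (I : Finset (Fin n)) : St n := fun t => if t ∈ I then 1 else 0

section HammingPi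

variable {ι : Type*} [Fintype ι] {β : ι → Type*} [∀ i, DecidableEq (β i)]

lemma hammingDist_add_left [∀ i, AddGroup (β i)] (c x y : ∀ i, β i) :
    hammingDist (c + x) (c + y) = hammingDist x y :=
  hammingDist_comp (fun i a => c i + a) fun i => add_right_injective (c i)

variable {V : (∀ i, β i) → ∀ i, β i}

lemma injective_of_hammingDist_eq (hV : ∀ x y, hammingDist (V x) (V y) = hammingDist x y) :
    Function.Injective V := fun x y h =>
  hammingDist_eq_zero.mp (by rw [← hV, h, hammingDist_self])

lemma hammingNorm_eq_of_hammingDist_eq [∀ i, Zero (β i)]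
    (hV : ∀ x y, hammingDist (V x) (V y) = hammingDist x y) (hV0 : V 0 = 0) (x : ∀ i, β i) :
    hammingNorm (V x) = hammingNorm x := by
  simpa [hV0] using hV x 0

end HammingPi

variable {n : ℕ}

lemma zmod_two_eq_zero_or_eq_one (a : ZMod 2) : a = 0 ∨ a = 1 := by decide +revert

lemma uv_injective : Function.Injective (uv (n := n)) := by
  intro i j h
  simpa [uv] using congrFun h i

lemma eS_singleton (i : Fin n) : eS {i} = uv i := by
  funext t; simp [eS, uv]

lemma eS_comp_symm (σ : Equiv.Perm (Fin n)) (I : Finset (Fin n)) :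
    eS I ∘ σ.symm = eS (I.image σ) := by
  funext t; simp [eS, ← Equiv.eq_symm_apply]

lemma hammingNorm_uv (i : Fin n) : hammingNorm (uv i) = 1 := by
  rw [hammingNorm, Finset.card_eq_one]
  exact ⟨i, by ext t; by_cases h : t = i <;> simp [uv, h]⟩

lemma exists_eq_uv_of_hammingNorm_eq_one {x : St n} (hx : hammingNorm x = 1) :
    ∃ i, x = uv i := by
  obtain ⟨i, hi⟩ := Finset.card_eq_one.mp hx
  refine ⟨i, funext fun t => ?_⟩
  have ht : x t ≠ 0 ↔ t = i := by simpa using Finset.ext_iff.mp hi t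
  by_cases h : t = i
  · subst h
    simpa [uv] using (zmod_two_eq_zero_or_eq_one (x t)).resolve_left (ht.mpr rfl)
  · simpa [uv, h] using mt ht.mp h

-- `d(x, e^i) = |x| ± 1`, written additively to avoid truncated subtraction.
lemma hammingDist_uv_add_ite (x : St n) (i : Fin n) :
    hammingDist x (uv i) + (if x i = 0 then 0 else 1) =
      hammingNorm x + (if x i = 0 then 1 else 0) := by
  classical
  simp only [hammingDist, hammingNorm, Finset.card_filter]
  rw [Fintype.sum_eq_add_sum_compl i,
    Fintype.sum_eq_add_sum_compl i (fun t => if x t ≠ 0 then 1 else 0)]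
  have hrest : ∑ t ∈ {i}ᶜ, (if x t ≠ uv i t then 1 else 0) =
      ∑ t ∈ {i}ᶜ, (if x t ≠ 0 then 1 else 0) :=
    Finset.sum_congr rfl fun t ht => by simp [uv, show t ≠ i by simpa using ht]
  rw [hrest]
  rcases zmod_two_eq_zero_or_eq_one (x i) with h | h <;> simp [uv, h] <;> omega

lemma apply_eq_of_hammingNorm_eq_of_hammingDist_uv_eq {x y : St n} {i j : Fin n}
    (hN : hammingNorm x = hammingNorm y) (hD : hammingDist x (uv i) = hammingDist y (uv j)) :
    x i = y j := by
  have hx := hammingDist_uv_add_ite x i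
  have hy := hammingDist_uv_add_ite y j
  rcases zmod_two_eq_zero_or_eq_one (x i) with h | h <;>
    rcases zmod_two_eq_zero_or_eq_one (y j) with h' | h' <;> simp [h, h'] at hx hy ⊢ <;> omega

section Isometry

variable {V : St n → St n}

lemma exists_perm_map_uv_of_hammingDist_eq
    (hV : ∀ x y, hammingDist (V x) (V y) = hammingDist x y) (hV0 : V 0 = 0) :
    ∃ σ : Equiv.Perm (Fin n), ∀ i, V (uv i) = uv (σ i) := by
  have : ∀ i, ∃ j, V (uv i) = uv j := fun i => exists_eq_uv_of_hammingNorm_eq_one <| by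
    rw [hammingNorm_eq_of_hammingDist_eq hV hV0, hammingNorm_uv]
  choose τ hτ using this
  have hτ_inj : Function.Injective τ := fun i j h =>
    uv_injective (injective_of_hammingDist_eq hV (by rw [hτ, hτ, h]))
  exact ⟨Equiv.ofBijective τ (Finite.injective_iff_bijective.mp hτ_inj), hτ⟩

lemma eq_comp_symm_of_map_uv (hV : ∀ x y, hammingDist (V x) (V y) = hammingDist x y)
    (hV0 : V 0 = 0) {σ : Equiv.Perm (Fin n)} (hσ : ∀ i, V (uv i) = uv (σ i)) (x : St n) :
    V x = x ∘ σ.symm := by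
  funext t
  obtain ⟨i, rfl⟩ := σ.surjective t
  rw [Function.comp_apply, Equiv.symm_apply_apply]
  exact apply_eq_of_hammingNorm_eq_of_hammingDist_uv_eq
    (hammingNorm_eq_of_hammingDist_eq hV hV0 x) (by rw [← hσ, hV])

end Isometry

lemma exists_perm_eq_add_comp_symm {U : St n → St n}
    (hU : ∀ x y, hammingDist (U x) (U y) = hammingDist x y) :
    ∃ σ : Equiv.Perm (Fin n), ∀ x, U x = U 0 + x ∘ σ.symm := by
  have hV : ∀ x y, hammingDist (-U 0 + U x) (-U 0 + U y) = hammingDist x y := fun x y => by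
    rw [hammingDist_add_left, hU]
  obtain ⟨σ, hσ⟩ := exists_perm_map_uv_of_hammingDist_eq hV (neg_add_cancel _)
  refine ⟨σ, fun x => ?_⟩
  rw [← eq_comp_symm_of_map_uv hV (neg_add_cancel _) hσ x, add_neg_cancel_left]

/-- Characterization of the isometries of `F_2^n` for the Hamming distance: every
isometry `U` is of the form `U(x + e^I) = U(x) + e^{σ(I)}` for a unique permutation `σ`
of the coordinates. -/
theorem stmt_14 (n : ℕ) (U : St n → St n)
    (hU : ∀ x y : St n, hammingDist (U x) (U y) = hammingDist x y) :
    ∃! σ : Equiv.Perm (Fin n),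
      ∀ (x : St n) (I : Finset (Fin n)), U (x + eS I) = U x + eS (I.image σ) := by
  obtain ⟨σ, hσ⟩ := exists_perm_eq_add_comp_symm hU
  have hσ_image : ∀ x I, U (x + eS I) = U x + eS (I.image σ) := fun x I => by
    rw [hσ (x + eS I), hσ x, Pi.add_comp, ← eS_comp_symm, add_assoc]
  refine ⟨σ, hσ_image, fun τ hτ => Equiv.ext fun i => uv_injective ?_⟩
  have h := (hτ 0 {i}).symm.trans (hσ_image 0 {i})
  simpa [eS_singleton] using h
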